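/- arXiv:1105.3686 — 7 statements merged into one kernel-verified Lean document; each statement's English description precedes it below -/
import Mathlib

section
/- Let A and B be m×n complex matrices and suppose rank(A) ≤ r. Then for every index i with r < i ≤ min(m, n), the i-th singular value of B satisfies σ_i(B) ≤ ‖B − A‖_F. -/
/-!
The eigenvalues of `Bᴴ B` that are at least `σ_i(B)²` include `σ_0(B)², …, σ_i(B)²` (with
multiplicity), so their orthonormal eigenvectors span a space `V` of dimension
`> i ≥ r ≥ rank A`. Hence `V` contains a vector `x ≠ 0` with `A x = 0`, and the Rayleigh
quotient of `Bᴴ B` on `V` gives `σ_i(B) ‖x‖ ≤ ‖B x‖ = ‖(B - A) x‖ ≤ ‖B - A‖_F ‖x‖`.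
-/

open Matrix

/-- `σ` lists the singular values of the complex matrix `M`: the entries of `σ` are
nonnegative, listed in decreasing order, and their squares are the eigenvalues of `Mᴴ M`
(up to a permutation); when `m < n` this automatically pads with zeros. -/
def IsSingularValues {m n : ℕ} (M : Matrix (Fin m) (Fin n) ℂ) (σ : Fin n → ℝ) : Prop :=
  Antitone σ ∧ (∀ i, 0 ≤ σ i) ∧
    ∃ e : Fin n ≃ Fin n,
      ∀ i, σ i ^ 2 = (Matrix.isHermitian_conjTranspose_mul_self M).eigenvalues (e i)

open Module Submodule
open scoped InnerProductSpace

theorem LinearIndependent.finrank_span_image_finset {ι K V : Type*} [DivisionRing K]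
    [AddCommGroup V] [Module K V] {v : ι → V} (hv : LinearIndependent K v) (s : Finset ι) :
    finrank K (span K (v '' s)) = s.card := by
  rw [Set.image_eq_range]
  exact (finrank_span_eq_card (hv.comp _ Subtype.val_injective)).trans (Fintype.card_coe s)

theorem LinearMap.exists_mem_ne_zero_apply_eq_zero_of_finrank_range_lt {K V W : Type*}
    [DivisionRing K] [AddCommGroup V] [Module K V] [AddCommGroup W] [Module K W]
    [FiniteDimensional K V]
    (f : V →ₗ[K] W) (U : Submodule K V) (h : finrank K (LinearMap.range f) < finrank K U) :
    ∃ x ∈ U, x ≠ 0 ∧ f x = 0 := by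
  obtain ⟨⟨x, hxU⟩, hx, hx0⟩ := exists_mem_ne_zero_of_ne_bot
    (LinearMap.ker_ne_bot_of_finrank_lt (f := f.rangeRestrict ∘ₗ U.subtype) h)
  refine ⟨x, hxU, fun hx_zero => hx0 (by simp [hx_zero]), ?_⟩
  simpa [Subtype.ext_iff] using hx

theorem OrthonormalBasis.inner_eq_zero_of_mem_span_image {ι 𝕜 E : Type*} [Fintype ι]
    [RCLike 𝕜] [NormedAddCommGroup E] [InnerProductSpace 𝕜 E] (b : OrthonormalBasis ι 𝕜 E)
    {s : Set ι} {x : E} (hx : x ∈ span 𝕜 (b '' s)) {j : ι} (hj : j ∉ s) : ⟪b j, x⟫_𝕜 = 0 := by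
  have hspan : span 𝕜 (b '' s) ≤ (𝕜 ∙ b j)ᗮ := by
    refine span_le.mpr (Set.image_subset_iff.mpr fun k hk => ?_)
    exact mem_orthogonal_singleton_iff_inner_right.mpr (b.orthonormal.2 fun h => hj (h ▸ hk))
  exact mem_orthogonal_singleton_iff_inner_right.mp (hspan hx)

namespace Matrix

variable {𝕜 : Type*} [RCLike 𝕜] {m n : Type*} [Fintype n] [DecidableEq n]

theorem norm_toEuclideanLin_le_frobenius [Fintype m] (M : Matrix m n 𝕜)
    (x : EuclideanSpace 𝕜 n) :
    ‖toEuclideanLin M x‖ ≤ √(∑ i, ∑ j, ‖M i j‖ ^ 2) * ‖x‖ := by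
  let _ := Matrix.frobeniusNormedAddCommGroup (m := m) (n := n) (α := 𝕜)
  have := frobenius_norm_mul M (replicateCol Unit x.ofLp)
  rw [← replicateCol_mulVec, frobenius_norm_replicateCol, frobenius_norm_replicateCol,
    frobenius_norm_def, ← Real.sqrt_eq_rpow] at this
  simpa [toLpLin_apply] using this

theorem IsHermitian.inner_toEuclideanLin_self_eq_sum {H : Matrix n n 𝕜} (hH : H.IsHermitian)
    (x : EuclideanSpace 𝕜 n) :
    ⟪x, toEuclideanLin H x⟫_𝕜 =
      ∑ j, (hH.eigenvalues j : 𝕜) * (‖⟪hH.eigenvectorBasis j, x⟫_𝕜‖ ^ 2 : ℝ) := by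
  set b := hH.eigenvectorBasis
  rw [← b.sum_inner_mul_inner]
  refine Finset.sum_congr rfl fun j _ => ?_
  have hbj : toEuclideanLin H (b j) = (hH.eigenvalues j : 𝕜) • b j := by
    ext k
    simpa [toLpLin_apply] using congrFun (hH.mulVec_eigenvectorBasis j) k
  rw [← isSymmetric_toEuclideanLin_iff.mpr hH, hbj, inner_smul_left, RCLike.conj_ofReal,
    ← inner_conj_symm, RCLike.ofReal_pow, ← RCLike.mul_conj]
  ring

theorem IsHermitian.mul_norm_sq_le_re_inner_of_mem_span {H : Matrix n n 𝕜} (hH : H.IsHermitian)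
    {c : ℝ} {s : Set n} (hs : ∀ j ∈ s, c ≤ hH.eigenvalues j) {x : EuclideanSpace 𝕜 n}
    (hx : x ∈ span 𝕜 (hH.eigenvectorBasis '' s)) :
    c * ‖x‖ ^ 2 ≤ RCLike.re ⟪x, toEuclideanLin H x⟫_𝕜 := by
  rw [hH.inner_toEuclideanLin_self_eq_sum, ← hH.eigenvectorBasis.sum_sq_norm_inner_right,
    Finset.mul_sum, map_sum]
  refine Finset.sum_le_sum fun j _ => ?_
  rw [← RCLike.ofReal_mul, RCLike.ofReal_re]
  by_cases hj : j ∈ s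
  · exact mul_le_mul_of_nonneg_right (hs j hj) (by positivity)
  · simp [hH.eigenvectorBasis.inner_eq_zero_of_mem_span_image hx hj]

theorem exists_mem_ne_zero_toEuclideanLin_eq_zero_of_rank_lt (A : Matrix m n 𝕜)
    (U : Submodule 𝕜 (EuclideanSpace 𝕜 n)) (h : A.rank < finrank 𝕜 U) :
    ∃ x ∈ U, x ≠ 0 ∧ toEuclideanLin A x = 0 := by
  have hrange :
      LinearMap.range (A.mulVecLin ∘ₗ (WithLp.linearEquiv 2 𝕜 (n → 𝕜)).toLinearMap) =
        LinearMap.range A.mulVecLin :=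
    LinearMap.range_comp_of_range_eq_top _ (LinearEquiv.range _)
  obtain ⟨x, hxU, hx0, hAx⟩ :=
    LinearMap.exists_mem_ne_zero_apply_eq_zero_of_finrank_range_lt _ U (by rwa [hrange])
  refine ⟨x, hxU, hx0, ?_⟩
  simpa [toLpLin_apply] using hAx

theorem mul_norm_le_norm_toEuclideanLin_of_mem_span [Fintype m] [DecidableEq m]
    (M : Matrix m n 𝕜) {σ : ℝ} (hσ : 0 ≤ σ) {s : Set n}
    (hs : ∀ j ∈ s, σ ^ 2 ≤ (isHermitian_conjTranspose_mul_self M).eigenvalues j)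
    {x : EuclideanSpace 𝕜 n}
    (hx : x ∈ span 𝕜 ((isHermitian_conjTranspose_mul_self M).eigenvectorBasis '' s)) :
    σ * ‖x‖ ≤ ‖toEuclideanLin M x‖ := by
  have h := (isHermitian_conjTranspose_mul_self M).mul_norm_sq_le_re_inner_of_mem_span hs hx
  rw [toLpLin_mul (q := 2), toEuclideanLin_conjTranspose_eq_adjoint, LinearMap.comp_apply,
    LinearMap.adjoint_inner_right, inner_self_eq_norm_sq, ← mul_pow] at h
  exact (pow_le_pow_iff_left₀ (by positivity) (norm_nonneg _) two_ne_zero).mp h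

end Matrix

theorem IsSingularValues.succ_le_card_filter_sq_le_eigenvalues {m n : ℕ}
    {M : Matrix (Fin m) (Fin n) ℂ} {σ : Fin n → ℝ} (h : IsSingularValues M σ) (i : Fin n) :
    (i : ℕ) + 1 ≤ (Finset.univ.filter fun j =>
      σ i ^ 2 ≤ (isHermitian_conjTranspose_mul_self M).eigenvalues j).card := by
  obtain ⟨hanti, hnonneg, e, he⟩ := h
  rw [← Fin.card_Iic]
  refine Finset.card_le_card_of_injOn e (fun k hk => ?_) e.injective.injOn
  simp only [Finset.coe_filter, Finset.mem_univ, true_and, Set.mem_ofPred_eq, ← he]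
  exact pow_le_pow_left₀ (hnonneg i) (hanti (Finset.mem_Iic.mp hk)) 2

/-- If `A, B` are `m × n` complex matrices with `rank A ≤ r`, then for every index `i` with
`r < i ≤ min m n` (so, 0-indexed, `r ≤ i < min m n`), the `i`-th singular value of `B`
satisfies `σ_i(B) ≤ ‖B - A‖_F`. -/
theorem stmt_4 (m n r : ℕ) (A B : Matrix (Fin m) (Fin n) ℂ) (hrank : A.rank ≤ r)
    (σB : Fin n → ℝ) (hB : IsSingularValues B σB) :
    ∀ i : Fin n, r ≤ (i : ℕ) → (i : ℕ) < min m n →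
      σB i ≤ Real.sqrt (∑ x, ∑ y, ‖(B - A) x y‖ ^ 2) := by
  intro i hri _
  set hH := isHermitian_conjTranspose_mul_self B
  set s := Finset.univ.filter fun j => σB i ^ 2 ≤ hH.eigenvalues j
  have hdim : A.rank < finrank ℂ (span ℂ (hH.eigenvectorBasis '' s)) := by
    rw [hH.eigenvectorBasis.orthonormal.linearIndependent.finrank_span_image_finset]
    exact hrank.trans_lt (Nat.lt_of_succ_le
      ((Nat.succ_le_succ hri).trans (hB.succ_le_card_filter_sq_le_eigenvalues i)))
  obtain ⟨x, hxV, hx0, hAx⟩ := A.exists_mem_ne_zero_toEuclideanLin_eq_zero_of_rank_lt _ hdim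
  have hBx : toEuclideanLin B x = toEuclideanLin (B - A) x := by
    rw [map_sub, LinearMap.sub_apply, hAx, sub_zero]
  have hlower := B.mul_norm_le_norm_toEuclideanLin_of_mem_span (hB.2.1 i)
    (fun j hj => (Finset.mem_filter.mp hj).2) hxV
  have hupper := hBx ▸ (B - A).norm_toEuclideanLin_le_frobenius x
  exact le_of_mul_le_mul_right (hlower.trans hupper) (norm_pos_iff.mpr hx0)
end

section
/- (Negative second moment identity) Let A be an n×m complex matrix (n ≤ m) of rank n, with rows a₁, …, a_n ∈ ℂ^m, and let σ₁ ≥ … ≥ σ_n > 0 be its singular values. For each i, let S_i denote the linear span in ℂ^m of the rows {a_j : j ≠ i}, and let dist(a_i, S_i) be the Euclidean distance from a_i to S_i. Then Σ_{i=1}^{n} σ_i^{−2} = Σ_{i=1}^{n} dist(a_i, S_i)^{−2}. -/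
/-!
With `G = A Aᴴ`, the sum `∑ σᵢ⁻²` is the trace of `G⁻¹`, and `G` is the transposed Gram matrix of
the rows. For linearly independent vectors `vᵢ`, the vector `hᵢ = ∑ₖ (gram v)⁻¹ₖᵢ vₖ` is dual to
them: `⟪vⱼ, hᵢ⟫ = δⱼᵢ`. So `hᵢ` is orthogonal to `Sᵢ`, lies in `Sᵢ ⊔ span {vᵢ}`, and
`‖hᵢ‖² = (gram v)⁻¹ᵢᵢ`; rescaling `hᵢ` to `hᵢ / ‖hᵢ‖²` gives the component of `vᵢ` orthogonal to
`Sᵢ`, whence `dist(vᵢ, Sᵢ) = ‖hᵢ‖⁻¹` and each diagonal entry of the inverse Gram matrix is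
`dist(vᵢ, Sᵢ)⁻²`.
-/

open Matrix
open scoped InnerProductSpace

section Distance

variable {𝕜 E : Type*} [RCLike 𝕜] [NormedAddCommGroup E] [InnerProductSpace 𝕜 E]

theorem Submodule.infDist_eq_norm_of_sub_mem_of_mem_orthogonal {K : Submodule 𝕜 E} {x u : E}
    (hx : x - u ∈ K) (hu : u ∈ Kᗮ) : Metric.infDist x (K : Set E) = ‖u‖ := by
  have hmin : ‖x - (x - u)‖ = ⨅ w : K, ‖x - w‖ :=
    (K.norm_eq_iInf_iff_inner_eq_zero hx).2 fun w hw => by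
      rw [sub_sub_cancel]; exact K.inner_left_of_mem_orthogonal hw hu
  rw [sub_sub_cancel] at hmin
  rw [hmin, Metric.infDist_eq_iInf]
  simp only [dist_eq_norm]
  rfl

theorem Submodule.infDist_eq_inv_norm_of_inner_eq_one {K : Submodule 𝕜 E} {x h : E}
    (hK : h ∈ Kᗮ) (hsup : h ∈ K ⊔ 𝕜 ∙ x) (hxh : ⟪x, h⟫_𝕜 = 1) :
    Metric.infDist x (K : Set E) = ‖h‖⁻¹ := by
  obtain ⟨k, hk, y, hy, hkt⟩ := Submodule.mem_sup.1 hsup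
  obtain ⟨t, rfl⟩ := Submodule.mem_span_singleton.1 hy
  have hpos : 0 < ‖h‖ := norm_pos_iff.2 (by rintro rfl; simp at hxh)
  -- pairing `h = k + t • x` with `h` shows that the coefficient `t` is `‖h‖²`
  have ht : t = ((‖h‖ ^ 2 : ℝ) : 𝕜) := by
    have : ⟪h, h⟫_𝕜 = (starRingEnd 𝕜) t := by
      calc ⟪h, h⟫_𝕜 = ⟪k + t • x, h⟫_𝕜 := by rw [hkt]
        _ = (starRingEnd 𝕜) t := by
          rw [inner_add_left, inner_smul_left, K.inner_right_of_mem_orthogonal hk hK, hxh]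
          simp
    rw [← RCLike.conj_conj t, ← this, inner_self_eq_norm_sq_to_K]
    simp
  have ht0 : t ≠ 0 := by rw [ht]; exact_mod_cast (pow_pos hpos 2).ne'
  rw [K.infDist_eq_norm_of_sub_mem_of_mem_orthogonal (u := t⁻¹ • h) ?_ (Kᗮ.smul_mem _ hK)]
  · rw [norm_smul, norm_inv, ht, RCLike.norm_ofReal, abs_of_pos (pow_pos hpos 2)]
    field_simp
  · have : x - t⁻¹ • h = -(t⁻¹ • k) := by
      rw [← hkt, smul_add, smul_smul, inv_mul_cancel₀ ht0, one_smul]; abel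
    rw [this]
    exact K.neg_mem (K.smul_mem _ hk)

end Distance

namespace Matrix

variable {𝕜 ι : Type*} [RCLike 𝕜]

theorem inv_gram_apply_self {E : Type*} [NormedAddCommGroup E] [InnerProductSpace 𝕜 E]
    [Fintype ι] [DecidableEq ι] {v : ι → E} (hv : LinearIndependent 𝕜 v) (i : ι) :
    (gram 𝕜 v)⁻¹ i i =
      ((Metric.infDist (v i) (Submodule.span 𝕜 (v '' {j | j ≠ i}) : Set E) ^ 2)⁻¹ : ℝ) := by
  set K := Submodule.span 𝕜 (v '' {j | j ≠ i})
  set C := (gram 𝕜 v)⁻¹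
  have hGC : gram 𝕜 v * C = 1 :=
    mul_nonsing_inv _ (isUnit_iff_ne_zero.2 (det_gram_ne_zero_iff_linearIndependent.2 hv))
  set h := ∑ k, C k i • v k with h_def
  have hdual : ∀ j, ⟪v j, h⟫_𝕜 = (1 : Matrix ι ι 𝕜) j i := fun j => by
    simp only [h, ← hGC, mul_apply, inner_sum, inner_smul_right, gram_apply, mul_comm]
  have hK : h ∈ Kᗮ := by
    refine (Submodule.isOrtho_span.2 ?_).symm (Submodule.mem_span_singleton_self h)
    rintro _ ⟨j, hj, rfl⟩ _ rfl
    rw [hdual, one_apply_ne hj]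
  have hsup : h ∈ K ⊔ 𝕜 ∙ v i := by
    rw [h_def, ← Finset.add_sum_erase _ _ (Finset.mem_univ i), add_comm]
    refine Submodule.add_mem_sup (K.sum_mem fun j hj => K.smul_mem _ ?_)
      (Submodule.smul_mem _ _ (Submodule.mem_span_singleton_self _))
    exact Submodule.subset_span ⟨j, Finset.ne_of_mem_erase hj, rfl⟩
  have hnorm : C i i = ((‖h‖ ^ 2 : ℝ) : 𝕜) := by
    have : ⟪h, h⟫_𝕜 = (starRingEnd 𝕜) (C i i) := by
      nth_rw 1 [h_def]
      simp only [sum_inner, inner_smul_left, hdual, one_apply, mul_ite, mul_one, mul_zero,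
        Finset.sum_ite_eq', Finset.mem_univ, if_true]
    rw [← RCLike.conj_conj (C i i), ← this, inner_self_eq_norm_sq_to_K]
    simp
  rw [hnorm, K.infDist_eq_inv_norm_of_inner_eq_one hK hsup (by rw [hdual, one_apply_eq]),
    inv_pow, inv_inv]

theorem IsHermitian.trace_inv [Fintype ι] [DecidableEq ι] {A : Matrix ι ι 𝕜}
    (hA : A.IsHermitian) (hA₀ : ∀ i, hA.eigenvalues i ≠ 0) :
    A⁻¹.trace = ∑ i, ((hA.eigenvalues i : 𝕜))⁻¹ := by
  have hinv : A⁻¹ = Unitary.conjStarAlgAut 𝕜 _ hA.eigenvectorUnitary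
      (diagonal fun i => ((hA.eigenvalues i : 𝕜))⁻¹) := by
    set U := hA.eigenvectorUnitary
    set d := hA.eigenvalues
    refine inv_eq_left_inv ?_
    rw [hA.spectral_theorem, ← map_mul, diagonal_mul_diagonal]
    simp [d, hA₀]
  rw [hinv, Unitary.conjStarAlgAut_apply, trace_mul_cycle, Unitary.coe_star_mul_self, one_mul,
    trace_diagonal]

theorem gram_eq_transpose_mul_conjTranspose {κ : Type*} [Fintype κ] {A : Matrix ι κ 𝕜}
    {v : ι → EuclideanSpace 𝕜 κ} (hv : ∀ i k, v i k = A i k) : gram 𝕜 v = (A * Aᴴ)ᵀ := by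
  ext i j
  simp [gram_apply, mul_apply, PiLp.inner_apply, hv]

end Matrix

theorem stmt_5_general (n m : ℕ)
    (A : Matrix (Fin n) (Fin m) ℂ)
    (σ : Fin n → ℝ) (hσ_pos : ∀ i, 0 < σ i)
    (hσ : ∃ e : Fin n ≃ Fin n,
      ∀ i, σ i ^ 2 = (Matrix.isHermitian_mul_conjTranspose_self A).eigenvalues (e i))
    (a : Fin n → EuclideanSpace ℂ (Fin m)) (ha : ∀ i j, a i j = A i j)
    (S : Fin n → Submodule ℂ (EuclideanSpace ℂ (Fin m)))
    (hS : ∀ i, S i = Submodule.span ℂ (a '' {j | j ≠ i})) :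
    ∑ i, (σ i ^ 2)⁻¹
      = ∑ i, (Metric.infDist (a i) (S i : Set (EuclideanSpace ℂ (Fin m))) ^ 2)⁻¹ := by
  obtain ⟨e, he⟩ := hσ
  set hG := isHermitian_mul_conjTranspose_self A
  have hpos : ∀ j, 0 < hG.eigenvalues j := fun j => by
    rw [← e.apply_symm_apply j, ← he]; exact pow_pos (hσ_pos _) 2
  have hgram : gram ℂ a = (A * Aᴴ)ᵀ := gram_eq_transpose_mul_conjTranspose ha
  have hli : LinearIndependent ℂ a := by
    refine det_gram_ne_zero_iff_linearIndependent.1 ?_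
    rw [hgram, det_transpose, hG.det_eq_prod_eigenvalues]
    exact Finset.prod_ne_zero_iff.2 fun j _ => Complex.ofReal_ne_zero.2 (hpos j).ne'
  have htrace : ((gram ℂ a)⁻¹).trace = ∑ j, ((hG.eigenvalues j : ℂ))⁻¹ := by
    rw [hgram, ← transpose_nonsing_inv, trace_transpose]
    exact hG.trace_inv fun j => (hpos j).ne'
  calc ∑ i, (σ i ^ 2)⁻¹ = ∑ j, (hG.eigenvalues j)⁻¹ := by
        simp only [he]; exact e.sum_comp fun j => (hG.eigenvalues j)⁻¹
    _ = _ := by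
      apply Complex.ofReal_injective
      push_cast
      rw [← htrace]
      simp only [trace, diag_apply, inv_gram_apply_self hli, hS]
      push_cast; rfl

/-- Negative second moment identity: let `A` be an `n × m` complex matrix (`n ≤ m`) of full
row rank `n`, with rows `a₁, …, a_n` (viewed in Euclidean space `ℂ^m`) and singular values
`σ₁ ≥ … ≥ σ_n > 0` (the positive square roots of the eigenvalues of `A Aᴴ`).  If `S_i`
denotes the span of the rows other than `a_i`, then
`∑ i, σ_i⁻² = ∑ i, dist(a_i, S_i)⁻²`. -/
theorem stmt_5 (n m : ℕ) (hnm : n ≤ m)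
    (A : Matrix (Fin n) (Fin m) ℂ) (hrank : A.rank = n)
    (σ : Fin n → ℝ) (hσ_anti : Antitone σ) (hσ_pos : ∀ i, 0 < σ i)
    (hσ : ∃ e : Fin n ≃ Fin n,
      ∀ i, σ i ^ 2 = (Matrix.isHermitian_mul_conjTranspose_self A).eigenvalues (e i))
    (a : Fin n → EuclideanSpace ℂ (Fin m)) (ha : ∀ i j, a i j = A i j)
    (S : Fin n → Submodule ℂ (EuclideanSpace ℂ (Fin m)))
    (hS : ∀ i, S i = Submodule.span ℂ (a '' {j | j ≠ i})) :
    ∑ i, (σ i ^ 2)⁻¹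
      = ∑ i, (Metric.infDist (a i) (S i : Set (EuclideanSpace ℂ (Fin m))) ^ 2)⁻¹ :=
  stmt_5_general n m A σ hσ_pos hσ a ha S hS
end

section
/- Let A be an n×m complex matrix (n ≤ m) of rank n, with rows a₁, …, a_n ∈ ℂ^m, and for each i let S_i denote the linear span of the rows {a_j : j ≠ i}. If there is δ > 0 such that dist(a_i, S_i) ≥ δ for every i, then the smallest singular value σ_n of A satisfies σ_n² ≥ δ²/n. -/
/-!
If every row `aᵢ` stays at distance `≥ δ` from the span of the others, then for any coefficients
`c` and any `i`, writing `∑ cⱼ aⱼ = cᵢ (aᵢ + s)` with `s` in that span gives `|cᵢ| δ ≤ ‖∑ cⱼ aⱼ‖`;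
summing the squares over `i` yields `‖c‖² δ² ≤ n ‖∑ cⱼ aⱼ‖²`. An eigenvalue of `A Aᴴ` with unit
eigenvector `v` equals `‖∑ v̄ⱼ aⱼ‖²`, so every eigenvalue, in particular `σₙ²`, is at least `δ²/n`.
-/

open Matrix

section LowerBound

variable {𝕜 E ι : Type*} [NormedField 𝕜] [SeminormedAddCommGroup E] [NormedSpace 𝕜 E]
  [Fintype ι] [DecidableEq ι] {a : ι → E} {δ : ℝ}

theorem norm_mul_le_norm_sum_smul_of_le_infDist
    (hdist : ∀ i, δ ≤ Metric.infDist (a i) (Submodule.span 𝕜 (a '' {j | j ≠ i}) : Set E))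
    (c : ι → 𝕜) (i : ι) :
    ‖c i‖ * δ ≤ ‖∑ j, c j • a j‖ := by
  rcases eq_or_ne (c i) 0 with hci | hci
  · simp [hci]
  set s := ∑ j ∈ Finset.univ.erase i, c j • a j
  have hs : s ∈ Submodule.span 𝕜 (a '' {j | j ≠ i}) :=
    Submodule.sum_mem _ fun j hj => Submodule.smul_mem _ _ <|
      Submodule.subset_span ⟨j, (Finset.mem_erase.mp hj).1, rfl⟩
  have hsplit : ∑ j, c j • a j = c i • (a i - -((c i)⁻¹ • s)) := by
    rw [sub_neg_eq_add, smul_add, smul_inv_smul₀ hci]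
    exact (Finset.add_sum_erase _ _ (Finset.mem_univ i)).symm
  calc ‖c i‖ * δ ≤ ‖c i‖ * dist (a i) (-((c i)⁻¹ • s)) := by
        gcongr
        exact (hdist i).trans <| Metric.infDist_le_dist_of_mem <|
          Submodule.neg_mem _ (Submodule.smul_mem _ _ hs)
    _ = ‖∑ j, c j • a j‖ := by rw [hsplit, norm_smul, dist_eq_norm]

theorem sum_norm_sq_mul_sq_le_card_mul_norm_sum_smul_sq (hδ : 0 ≤ δ)
    (hdist : ∀ i, δ ≤ Metric.infDist (a i) (Submodule.span 𝕜 (a '' {j | j ≠ i}) : Set E))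
    (c : ι → 𝕜) :
    (∑ i, ‖c i‖ ^ 2) * δ ^ 2 ≤ Fintype.card ι * ‖∑ i, c i • a i‖ ^ 2 := by
  calc (∑ i, ‖c i‖ ^ 2) * δ ^ 2 = ∑ i, (‖c i‖ * δ) ^ 2 := by
        simp only [Finset.sum_mul, mul_pow]
    _ ≤ ∑ _i : ι, ‖∑ i, c i • a i‖ ^ 2 := by
        gcongr with i
        exact norm_mul_le_norm_sum_smul_of_le_infDist hdist c i
    _ = Fintype.card ι * ‖∑ i, c i • a i‖ ^ 2 := by simp

end LowerBound

theorem Matrix.eigenvalues_mul_conjTranspose_self_eq_norm_sq {𝕜 m n : Type*} [RCLike 𝕜]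
    [Fintype m] [Fintype n] [DecidableEq m] (A : Matrix m n 𝕜) (k : m) :
    (isHermitian_mul_conjTranspose_self A).eigenvalues k =
      ‖WithLp.toLp 2
        (star ⇑((isHermitian_mul_conjTranspose_self A).eigenvectorBasis k) ᵥ* A)‖ ^ 2 := by
  rw [IsHermitian.eigenvalues_eq, ← mulVec_mulVec, dotProduct_mulVec,
    ← inner_self_eq_norm_sq (𝕜 := 𝕜), EuclideanSpace.inner_eq_star_dotProduct, star_vecMul,
    star_star]

/-- Let `A` be an `n × m` complex matrix (`n ≤ m`, `n ≥ 1`) of full row rank `n`, with rows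
`a₁, …, a_n` (viewed in Euclidean space `ℂ^m`) and singular values `σ₁ ≥ … ≥ σ_n > 0`
(the positive square roots of the eigenvalues of `A Aᴴ`).  If `S_i` denotes the span of the
rows other than `a_i`, and `dist(a_i, S_i) ≥ δ > 0` for every `i`, then the smallest
singular value satisfies `σ_n² ≥ δ²/n`. -/
theorem stmt_6 (n m : ℕ) (hn : 0 < n)
    (A : Matrix (Fin n) (Fin m) ℂ)
    (σ : Fin n → ℝ)
    (hσ : ∃ e : Fin n ≃ Fin n,
      ∀ i, σ i ^ 2 = (Matrix.isHermitian_mul_conjTranspose_self A).eigenvalues (e i))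
    (a : Fin n → EuclideanSpace ℂ (Fin m)) (ha : ∀ i j, a i j = A i j)
    (S : Fin n → Submodule ℂ (EuclideanSpace ℂ (Fin m)))
    (hS : ∀ i, S i = Submodule.span ℂ (a '' {j | j ≠ i}))
    (δ : ℝ) (hδ : 0 < δ)
    (hdist : ∀ i, δ ≤ Metric.infDist (a i) (S i : Set (EuclideanSpace ℂ (Fin m)))) :
    δ ^ 2 / n ≤ σ ⟨n - 1, by omega⟩ ^ 2 := by
  obtain ⟨e, he⟩ := hσ
  rw [he, div_le_iff₀ (by exact_mod_cast hn), eigenvalues_mul_conjTranspose_self_eq_norm_sq]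
  set v := (isHermitian_mul_conjTranspose_self A).eigenvectorBasis (e ⟨n - 1, by omega⟩)
  have hv : ∑ i, ‖star (v i)‖ ^ 2 = 1 := by
    simp [← EuclideanSpace.norm_sq_eq, v]
  have hrows : WithLp.toLp 2 (star ⇑v ᵥ* A) = ∑ i, star (v i) • a i := by
    ext j
    simp [vecMul_eq_sum, ha]
  have hbound := sum_norm_sq_mul_sq_le_card_mul_norm_sum_smul_sq hδ.le
    (fun i => hS i ▸ hdist i) (fun i => star (v i))
  rw [hv, one_mul, Fintype.card_fin] at hbound
  rwa [hrows, mul_comm]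
end

section
/- Fix an integer K ≥ 2 and real numbers N > 0 and N_fd ≥ 0 with N ≥ N_fd + K − 1. Define the net degrees of freedom of zero-forcing with quantization-scaling parameter α > 0 as f(α) = K·( min(α, 1)·(1 − N_fd/N) − α(K−1)/N ). Then for every α > 0, f(α) ≤ K·(1 − (N_fd + K − 1)/N), with equality at α = 1; i.e., the maximum net DoF of zero-forcing is K(1 − (N_fd + K − 1)/N), attained at α = 1. -/
/-!
The net DoF is `K` times the concave piecewise-linear function `min α 1 * a - α * b`, with
`a = 1 - N_fd/N` the useful fraction of the coherence block and `b = (K-1)/N` the feedback cost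
per unit of `α`. It increases on `α ≤ 1` because `b ≤ a`, which is exactly `N ≥ N_fd + K - 1`,
and decreases on `α ≥ 1` because `b ≥ 0`; so its maximum `a - b` is attained at the kink `α = 1`.
-/

theorem min_one_mul_sub_mul_le {a b : ℝ} (hb : 0 ≤ b) (hba : b ≤ a) (α : ℝ) :
    min α 1 * a - α * b ≤ a - b := by
  rcases le_total α 1 with hα | hα
  · rw [min_eq_left hα]
    nlinarith
  · rw [min_eq_right hα]
    nlinarith

theorem stmt_7_general (K : ℕ) (hK : 2 ≤ K) (N Nfd : ℝ) (hN : 0 < N)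
    (hNK : Nfd + (K : ℝ) - 1 ≤ N) :
    (∀ α : ℝ, 0 < α →
      (K : ℝ) * (min α 1 * (1 - Nfd / N) - α * ((K : ℝ) - 1) / N)
        ≤ (K : ℝ) * (1 - (Nfd + (K : ℝ) - 1) / N)) ∧
    (K : ℝ) * (min (1 : ℝ) 1 * (1 - Nfd / N) - 1 * ((K : ℝ) - 1) / N)
      = (K : ℝ) * (1 - (Nfd + (K : ℝ) - 1) / N) := by
  have hsplit : 1 - (Nfd + (K : ℝ) - 1) / N = (1 - Nfd / N) - ((K : ℝ) - 1) / N := by ring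
  have hcost : 0 ≤ ((K : ℝ) - 1) / N := by
    have : (2 : ℝ) ≤ K := by exact_mod_cast hK
    exact div_nonneg (by linarith) hN.le
  have hcost_le : ((K : ℝ) - 1) / N ≤ 1 - Nfd / N := by
    rw [div_le_iff₀ hN, sub_mul, div_mul_cancel₀ _ hN.ne']
    linarith
  refine ⟨fun α _ => ?_, by rw [min_self, hsplit, one_mul, one_mul]⟩
  rw [hsplit, mul_div_assoc]
  exact mul_le_mul_of_nonneg_left (min_one_mul_sub_mul_le hcost hcost_le α) K.cast_nonneg

/-- Maximum net DoF of zero-forcing: for K users, coherence time `N`, feedback delay `Nfd`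
with `N ≥ Nfd + K - 1`, the net DoF `f(α) = K (min(α,1)(1 - Nfd/N) - α(K-1)/N)` satisfies
`f(α) ≤ K (1 - (Nfd + K - 1)/N)` for all `α > 0`, with equality at `α = 1`. -/
theorem stmt_7 (K : ℕ) (hK : 2 ≤ K) (N Nfd : ℝ) (hN : 0 < N) (hNfd : 0 ≤ Nfd)
    (hNK : Nfd + (K : ℝ) - 1 ≤ N) :
    (∀ α : ℝ, 0 < α →
      (K : ℝ) * (min α 1 * (1 - Nfd / N) - α * ((K : ℝ) - 1) / N)
        ≤ (K : ℝ) * (1 - (Nfd + (K : ℝ) - 1) / N)) ∧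
    (K : ℝ) * (min (1 : ℝ) 1 * (1 - Nfd / N) - 1 * ((K : ℝ) - 1) / N)
      = (K : ℝ) * (1 - (Nfd + (K : ℝ) - 1) / N) :=
  stmt_7_general K hK N Nfd hN hNK
end

section
/- Fix an integer K ≥ 2 and a real number N with N ≥ K·(H_K − 1), where H_K = 1 + 1/2 + … + 1/K. Define, for α > 0, F(α) = min( (N + α(K−1)(N − K(H_K − 1))) / (H_K · N) , K·(N − α(K−1)(H_K − 1)) / (H_K · N) ). Then for every α > 0, F(α) ≤ K·(N − (K−1)(H_K − 1)) / (H_K · N), with equality at α = 1; i.e., the maximum net DoF of the K-user MAT scheme is K(N − (K−1)(H_K − 1))/(H_K N), attained at α = 1. -/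
/-! Both entries of the minimum are affine in `α`: the first is nondecreasing because
`N ≥ K (H_K - 1)`, the second is nonincreasing, and they coincide at `α = 1`. Hence the
minimum of the two never exceeds their common value at `α = 1`. -/

noncomputable def harmonicNumber (K : ℕ) : ℝ := ∑ i ∈ Finset.range K, (1 : ℝ) / (i + 1)

lemma one_le_harmonicNumber {K : ℕ} (hK : 1 ≤ K) : 1 ≤ harmonicNumber K := by
  simpa [harmonicNumber] using Finset.single_le_sum (f := fun i : ℕ => (1 : ℝ) / (i + 1))
    (fun i _ => by positivity) (Finset.mem_range.2 hK)

lemma min_le_of_monotone_of_antitone {α β : Type*} [LinearOrder α] [LinearOrder β]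
    {f g : α → β} (hf : Monotone f) (hg : Antitone g) {a : α} (hfg : f a = g a) (x : α) :
    min (f x) (g x) ≤ g a := by
  rcases le_total x a with h | h
  · exact (min_le_left _ _).trans (hfg ▸ hf h)
  · exact (min_le_right _ _).trans (hg h)

/-- Maximum net DoF of the K-user MAT scheme: with `K ≥ 2`, `N ≥ K (H_K - 1)`,
`F(α) = min((N + α(K-1)(N - K(H_K-1)))/(H_K N), K(N - α(K-1)(H_K-1))/(H_K N))`
satisfies `F(α) ≤ K(N - (K-1)(H_K-1))/(H_K N)` for all `α > 0`, with equality at `α = 1`. -/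
theorem stmt_10 (K : ℕ) (hK : 2 ≤ K) (N : ℝ)
    (hN : (K : ℝ) * (harmonicNumber K - 1) ≤ N) :
    (∀ α : ℝ, 0 < α →
      min ((N + α * ((K : ℝ) - 1) * (N - (K : ℝ) * (harmonicNumber K - 1)))
            / (harmonicNumber K * N))
          ((K : ℝ) * (N - α * ((K : ℝ) - 1) * (harmonicNumber K - 1))
            / (harmonicNumber K * N))
        ≤ (K : ℝ) * (N - ((K : ℝ) - 1) * (harmonicNumber K - 1)) / (harmonicNumber K * N)) ∧
    min ((N + 1 * ((K : ℝ) - 1) * (N - (K : ℝ) * (harmonicNumber K - 1)))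
          / (harmonicNumber K * N))
        ((K : ℝ) * (N - 1 * ((K : ℝ) - 1) * (harmonicNumber K - 1))
          / (harmonicNumber K * N))
      = (K : ℝ) * (N - ((K : ℝ) - 1) * (harmonicNumber K - 1)) / (harmonicNumber K * N) := by
  set H := harmonicNumber K
  have hH : 0 ≤ H - 1 := sub_nonneg.2 (one_le_harmonicNumber (by omega))
  have hK1 : (0 : ℝ) ≤ K - 1 := by
    rw [sub_nonneg, Nat.one_le_cast]
    omega
  have hgap : 0 ≤ N - K * (H - 1) := sub_nonneg.2 hN
  have hD : 0 ≤ H * N := mul_nonneg (by linarith) (by nlinarith)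
  have hf : Monotone fun α : ℝ => (N + α * (K - 1) * (N - K * (H - 1))) / (H * N) :=
    fun x y hxy => by dsimp only; gcongr
  have hg : Antitone fun α : ℝ => K * (N - α * (K - 1) * (H - 1)) / (H * N) :=
    fun x y hxy => by dsimp only; gcongr
  have hcross : (N + 1 * (K - 1) * (N - K * (H - 1))) / (H * N)
      = K * (N - 1 * (K - 1) * (H - 1)) / (H * N) := by ring
  rw [show (K : ℝ) * (N - (K - 1) * (H - 1)) = K * (N - 1 * (K - 1) * (H - 1)) by ring]
  exact ⟨fun α _ => min_le_of_monotone_of_antitone hf hg hcross α, by rw [hcross, min_self]⟩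
end

section
/- Fix an integer K ≥ 2 and a real number N > 0, and let H_K = 1 + 1/2 + … + 1/K. Then H_K < K, and the inequality K·(N − (K−1)(H_K − 1)) / (H_K · N) ≤ 1 holds if and only if N ≤ K(K−1)(H_K − 1) / (K − H_K). That is, the maximum net DoF of the K-user MAT scheme is at most the net DoF 1 of single-user transmission exactly when the coherence time satisfies N ≤ K(K−1)(H_K − 1)/(K − H_K). -/
lemma harmonicNumber_lt_self {K : ℕ} (hK : 2 ≤ K) : harmonicNumber K < K := by
  calc harmonicNumber K < ∑ _i ∈ Finset.range K, (1 : ℝ) :=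
        Finset.sum_lt_sum
          (fun i _ => div_le_one_of_le₀ (by linarith [i.cast_nonneg (α := ℝ)]) (by positivity))
          ⟨1, Finset.mem_range.2 (by omega), by norm_num⟩
    _ = K := by simp

lemma mul_sub_div_mul_le_one_iff {k h c N : ℝ} (hh : 0 < h) (hN : 0 < N) (hhk : h < k) :
    k * (N - c) / (h * N) ≤ 1 ↔ N ≤ k * c / (k - h) := by
  rw [div_le_one (by positivity), le_div_iff₀ (sub_pos.2 hhk)]
  constructor <;> intro _ <;> linarith

/-- For `K ≥ 2` and `N > 0`, one has `H_K < K`, and the maximum net DoF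
`K(N - (K-1)(H_K-1))/(H_K N)` of the K-user MAT scheme is at most 1 iff
`N ≤ K(K-1)(H_K-1)/(K - H_K)`. -/
theorem stmt_15 (K : ℕ) (hK : 2 ≤ K) (N : ℝ) (hN : 0 < N) :
    harmonicNumber K < (K : ℝ) ∧
    ((K : ℝ) * (N - ((K : ℝ) - 1) * (harmonicNumber K - 1)) / (harmonicNumber K * N) ≤ 1 ↔
      N ≤ (K : ℝ) * ((K : ℝ) - 1) * (harmonicNumber K - 1) / ((K : ℝ) - harmonicNumber K)) := by
  have hlt := harmonicNumber_lt_self hK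
  have hpos : 0 < harmonicNumber K := one_pos.trans_le (one_le_harmonicNumber (by omega))
  refine ⟨hlt, ?_⟩
  rw [mul_sub_div_mul_le_one_iff hpos hN hlt, mul_assoc]
end

section
/- Fix an integer K ≥ 2 and real numbers N > 0 and N_fd ≥ 0, and let H_K = 1 + 1/2 + … + 1/K. Then the inequality K·(N − (K−1)(H_K − 1)) / (H_K · N) ≤ K·(1 − (N_fd + K − 1)/N) holds if and only if N ≥ (H_K · N_fd + K − 1) / (H_K − 1). That is, the maximum net DoF of zero-forcing is at least the maximum net DoF of the K-user MAT scheme exactly when the coherence time satisfies N ≥ (H_K N_fd + K − 1)/(H_K − 1). -/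
lemma harmonicNumber_two : harmonicNumber 2 = 3 / 2 := by
  norm_num [harmonicNumber, Finset.sum_range_succ]

lemma harmonicNumber_mono : Monotone harmonicNumber := fun _ _ hmn =>
  Finset.sum_le_sum_of_subset_of_nonneg (Finset.range_subset_range.mpr hmn)
    fun _ _ _ => by positivity

lemma one_lt_harmonicNumber {K : ℕ} (hK : 2 ≤ K) : 1 < harmonicNumber K :=
  calc (1 : ℝ) < harmonicNumber 2 := by rw [harmonicNumber_two]; norm_num
    _ ≤ harmonicNumber K := harmonicNumber_mono hK

/-- Clearing the positive denominators `H N` and `H - 1` and cancelling `k` turns both sides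
into the linear inequality `H F + k - 1 ≤ (H - 1) N`. -/
lemma mul_sub_div_le_mul_one_sub_div_iff {k H N F : ℝ} (hk : 0 < k) (hH : 1 < H)
    (hN : 0 < N) :
    k * (N - (k - 1) * (H - 1)) / (H * N) ≤ k * (1 - (F + k - 1) / N) ↔
      (H * F + k - 1) / (H - 1) ≤ N := by
  have hHN : 0 < H * N := by positivity
  have hrhs : k * (1 - (F + k - 1) / N) * (H * N) = k * (H * (N - (F + k - 1))) := by
    field_simp
  rw [div_le_iff₀ hHN, hrhs, mul_le_mul_iff_right₀ hk, div_le_iff₀ (sub_pos.mpr hH)]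
  constructor <;> intro h <;> linarith

theorem stmt_16_general (K : ℕ) (hK : 2 ≤ K) (N Nfd : ℝ) (hN : 0 < N) :
    (K : ℝ) * (N - ((K : ℝ) - 1) * (harmonicNumber K - 1)) / (harmonicNumber K * N)
        ≤ (K : ℝ) * (1 - (Nfd + (K : ℝ) - 1) / N) ↔
      N ≥ (harmonicNumber K * Nfd + (K : ℝ) - 1) / (harmonicNumber K - 1) :=
  mul_sub_div_le_mul_one_sub_div_iff (by positivity) (one_lt_harmonicNumber hK) hN

/-- For `K ≥ 2`, `N > 0`, `Nfd ≥ 0`, the maximum net DoF `K(N - (K-1)(H_K-1))/(H_K N)` of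
the K-user MAT scheme is at most the maximum net DoF `K(1 - (Nfd + K - 1)/N)` of
zero-forcing iff `N ≥ (H_K Nfd + K - 1)/(H_K - 1)`. -/
theorem stmt_16 (K : ℕ) (hK : 2 ≤ K) (N Nfd : ℝ) (hN : 0 < N) (hNfd : 0 ≤ Nfd) :
    (K : ℝ) * (N - ((K : ℝ) - 1) * (harmonicNumber K - 1)) / (harmonicNumber K * N)
        ≤ (K : ℝ) * (1 - (Nfd + (K : ℝ) - 1) / N) ↔
      N ≥ (harmonicNumber K * Nfd + (K : ℝ) - 1) / (harmonicNumber K - 1) :=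
  stmt_16_general K hK N Nfd hN
end
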